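/- arXiv:2108.03059 — 3 statements merged into one kernel-verified Lean document; each statement's English description precedes it below -/
import Mathlib

section
/- Let c be a solvable configuration on G and A ⊆ V. Then A is not solvable if and only if x_A·p = 1 for exactly half of the solving patterns p for c (i.e., the number of solving patterns p for c with x_A·p = 1 equals the number with x_A·p = 0). Moreover, A is solvable if and only if either x_A·p = 1 for all solving patterns p for c, or x_A·p = 0 for all solving patterns p for c. -/
open Matrix
open scoped Classical

/-- The closed neighborhood matrix of a simple graph over `ℤ₂`:
`N(G) u v = 1` iff `u = v` or `u` is adjacent to `v`. -/
noncomputable def nbhdMatrix {V : Type*} [Fintype V] (G : SimpleGraph V) :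
    Matrix V V (ZMod 2) :=
  Matrix.of fun u v => if u = v ∨ G.Adj u v then 1 else 0

/-- The nullity of a matrix over `ℤ₂`: the dimension of its kernel. -/
noncomputable def nullityM {V : Type*} [Fintype V] (M : Matrix V V (ZMod 2)) : ℕ :=
  Module.finrank (ZMod 2) (LinearMap.ker M.mulVecLin)

/-- The nullity `ν(G)` of a graph. -/
noncomputable def graphNullity {V : Type*} [Fintype V] (G : SimpleGraph V) : ℕ :=
  nullityM (nbhdMatrix G)

/-- Characteristic vector of a set of vertices. -/
noncomputable def chi {V : Type*} (A : Set V) : V → ZMod 2 :=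
  fun v => if v ∈ A then 1 else 0

/-- A configuration `c` is solvable (w.r.t. the matrix `M`) if `M p = c` for some pattern `p`. -/
def Solv {V : Type*} [Fintype V] (M : Matrix V V (ZMod 2)) (c : V → ZMod 2) : Prop :=
  ∃ p : V → ZMod 2, M.mulVec p = c


/-!
Since `N(G)` is symmetric, the Fredholm alternative (the range of a matrix is the orthogonal
complement of the kernel of its transpose for the nondegenerate dot product) says that `x` is
solvable iff `x ⬝ᵥ q = 0` for every `q ∈ ker N(G)`. The solving patterns for `c` form the coset
`p₀ + ker N(G)`, so `p ↦ x ⬝ᵥ p` is constant on them exactly in that case. Otherwise some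
`q ∈ ker N(G)` has `x ⬝ᵥ q = 1`, and `p ↦ p + q` is a bijection between the solving patterns with
`x ⬝ᵥ p = 1` and those with `x ⬝ᵥ p = 0`.
-/

theorem zmod_two_eq_zero_or_eq_one (a : ZMod 2) : a = 0 ∨ a = 1 := by
  revert a
  decide

namespace Matrix

variable {m n : Type*} [Fintype n]

theorem orthogonal_range_mulVecLin [Fintype m] {R : Type*} [CommRing R] (M : Matrix m n R) :
    (toBilin' (1 : Matrix m m R)).orthogonal (LinearMap.range M.mulVecLin) =
      LinearMap.ker Mᵀ.mulVecLin := by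
  ext q
  have adjoint : ∀ p, M *ᵥ p ⬝ᵥ q = Mᵀ *ᵥ q ⬝ᵥ p := fun p => by
    rw [dotProduct_comm (Mᵀ *ᵥ q), dotProduct_transpose_mulVec, dotProduct_comm]
  simp only [LinearMap.BilinForm.mem_orthogonal_iff, LinearMap.mem_range, mulVecLin_apply,
    forall_exists_index, forall_apply_eq_imp_iff, toBilin'_apply', one_mulVec, LinearMap.mem_ker,
    adjoint]
  exact ⟨dotProduct_eq_zero _, fun h p => by rw [h, zero_dotProduct]⟩

theorem exists_mulVec_eq_iff [Fintype m] {K : Type*} [Field K] (M : Matrix m n K) (x : m → K) :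
    (∃ p, M *ᵥ p = x) ↔ ∀ q, Mᵀ *ᵥ q = 0 → q ⬝ᵥ x = 0 := by
  have hB : (toBilin' (1 : Matrix m m K)).Nondegenerate :=
    (nondegenerate_of_det_ne_zero (by simp)).toBilin'
  have hB₀ : (toBilin' (1 : Matrix m m K)).IsRefl := fun v w h => by
    simpa [toBilin'_apply', dotProduct_comm] using h
  have hrange := LinearMap.BilinForm.orthogonal_orthogonal hB hB₀ (LinearMap.range M.mulVecLin)
  rw [orthogonal_range_mulVecLin] at hrange
  change x ∈ LinearMap.range M.mulVecLin ↔ _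
  rw [← hrange]
  simp [LinearMap.BilinForm.mem_orthogonal_iff, toBilin'_apply', mulVec_transpose]

section SolutionSets

variable {R : Type*} [CommRing R] {M : Matrix m n R} {c : m → R} {p₀ : n → R}

def solutionsWithDot (M : Matrix m n R) (c : m → R) (x : n → R) (b : R) : Set (n → R) :=
  {p | M *ᵥ p = c ∧ x ⬝ᵥ p = b}

theorem image_add_solutionsWithDot {q : n → R} (hq : M *ᵥ q = 0) (x : n → R) (b : R) :
    (· + q) '' solutionsWithDot M c x b = solutionsWithDot M c x (b + x ⬝ᵥ q) := by
  ext p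
  simp only [Set.image_add_right, Set.mem_preimage, solutionsWithDot, Set.mem_ofPred_eq,
    ← sub_eq_add_neg, mulVec_sub, hq, sub_zero, dotProduct_sub, sub_eq_iff_eq_add]

theorem forall_ker_dotProduct_eq_zero_iff (hp₀ : M *ᵥ p₀ = c) (x : n → R) :
    (∀ q, M *ᵥ q = 0 → x ⬝ᵥ q = 0) ↔ ∀ p, M *ᵥ p = c → x ⬝ᵥ p = x ⬝ᵥ p₀ := by
  refine ⟨fun h p hp => ?_, fun h q hq => ?_⟩
  · have hker : M *ᵥ (p - p₀) = 0 := by rw [mulVec_sub, hp, hp₀, sub_self]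
    simpa [dotProduct_sub, sub_eq_zero] using h _ hker
  · have hsol : M *ᵥ (p₀ + q) = c := by rw [mulVec_add, hp₀, hq, add_zero]
    simpa [dotProduct_add] using h _ hsol

end SolutionSets

section ZModTwo

variable {M : Matrix m n (ZMod 2)} {c : m → ZMod 2} {p₀ : n → ZMod 2}

theorem forall_ker_dotProduct_eq_zero_iff_zmod_two (hp₀ : M *ᵥ p₀ = c) (x : n → ZMod 2) :
    (∀ q, M *ᵥ q = 0 → x ⬝ᵥ q = 0) ↔
      (∀ p, M *ᵥ p = c → x ⬝ᵥ p = 1) ∨ (∀ p, M *ᵥ p = c → x ⬝ᵥ p = 0) := by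
  rw [forall_ker_dotProduct_eq_zero_iff hp₀]
  constructor
  · intro h
    rcases zmod_two_eq_zero_or_eq_one (x ⬝ᵥ p₀) with h0 | h1
    · exact Or.inr fun p hp => (h p hp).trans h0
    · exact Or.inl fun p hp => (h p hp).trans h1
  · rintro (h | h) p hp <;> rw [h p hp, h p₀ hp₀]

theorem ncard_solutionsWithDot_one_eq_zero_iff (hp₀ : M *ᵥ p₀ = c) (x : n → ZMod 2) :
    (solutionsWithDot M c x 1).ncard = (solutionsWithDot M c x 0).ncard ↔
      ¬ ∀ q, M *ᵥ q = 0 → x ⬝ᵥ q = 0 := by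
  constructor
  · intro heq hker
    have ncard_ne : ∀ b b' : ZMod 2, b' ≠ b → (∀ p, M *ᵥ p = c → x ⬝ᵥ p = b) →
        (solutionsWithDot M c x b').ncard ≠ (solutionsWithDot M c x b).ncard := by
      intro b b' hb h
      have hempty : solutionsWithDot M c x b' = ∅ :=
        Set.eq_empty_of_forall_notMem fun p hp => hb (hp.2.symm.trans (h p hp.1))
      have hne : (solutionsWithDot M c x b).Nonempty := ⟨p₀, hp₀, h p₀ hp₀⟩
      rw [hempty, Set.ncard_empty]
      exact hne.ncard_pos.ne
    rcases (forall_ker_dotProduct_eq_zero_iff_zmod_two hp₀ x).1 hker with h | h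
    · exact ncard_ne 1 0 (by decide) h heq.symm
    · exact ncard_ne 0 1 (by decide) h heq
  · intro hker
    push Not at hker
    obtain ⟨q, hq, hxq⟩ := hker
    replace hxq : x ⬝ᵥ q = 1 := (zmod_two_eq_zero_or_eq_one (x ⬝ᵥ q)).resolve_left hxq
    calc (solutionsWithDot M c x 1).ncard
        = ((· + q) '' solutionsWithDot M c x 1).ncard :=
          (Set.ncard_image_of_injective _ (add_left_injective q)).symm
      _ = (solutionsWithDot M c x 0).ncard := by
          rw [image_add_solutionsWithDot hq, hxq, CharTwo.add_self_eq_zero]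

end ZModTwo

end Matrix

theorem nbhdMatrix_transpose {V : Type*} [Fintype V] (G : SimpleGraph V) :
    (nbhdMatrix G)ᵀ = nbhdMatrix G := by
  ext u v
  simp only [transpose_apply, nbhdMatrix, of_apply, eq_comm, G.adj_comm]

theorem solv_nbhdMatrix_iff {V : Type*} [Fintype V] (G : SimpleGraph V) (x : V → ZMod 2) :
    Solv (nbhdMatrix G) x ↔ ∀ q, nbhdMatrix G *ᵥ q = 0 → x ⬝ᵥ q = 0 := by
  simpa only [Solv, nbhdMatrix_transpose, dotProduct_comm] using
    exists_mulVec_eq_iff (nbhdMatrix G) x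

/-- Let `c` be a solvable configuration and `A ⊆ V`. Then `A` is not solvable iff
`x_A · p = 1` for exactly half of the solving patterns `p` for `c`; and `A` is solvable
iff either `x_A · p = 1` for all such `p`, or `x_A · p = 0` for all such `p`. -/
theorem stmt7 {V : Type*} [Fintype V] (G : SimpleGraph V) (c : V → ZMod 2)
    (hc : Solv (nbhdMatrix G) c) (A : Set V) :
    (¬ Solv (nbhdMatrix G) (chi A) ↔
      {p : V → ZMod 2 | (nbhdMatrix G).mulVec p = c ∧ chi A ⬝ᵥ p = 1}.ncard =
        {p : V → ZMod 2 | (nbhdMatrix G).mulVec p = c ∧ chi A ⬝ᵥ p = 0}.ncard) ∧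
    (Solv (nbhdMatrix G) (chi A) ↔
      ((∀ p : V → ZMod 2, (nbhdMatrix G).mulVec p = c → chi A ⬝ᵥ p = 1) ∨
       (∀ p : V → ZMod 2, (nbhdMatrix G).mulVec p = c → chi A ⬝ᵥ p = 0))) := by
  obtain ⟨p₀, hp₀⟩ := hc
  rw [solv_nbhdMatrix_iff]
  exact ⟨(ncard_solutionsWithDot_one_eq_zero_iff hp₀ (chi A)).symm,
    forall_ker_dotProduct_eq_zero_iff_zmod_two hp₀ (chi A)⟩
end

section
/- Let A ⊆ V be a solvable set in G. Then for every odd dominating pattern s of G and every solving pattern r for x_A, one has x_A·s = x_A·r. Consequently, A is AO if and only if A is x_A-AO, and A is NO if and only if A is x_A-NO. -/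
open Matrix
open scoped Classical

/-- `A` is `c`-always odd activated: `A` is solvable and `x_A · p = 1` for every solving
pattern `p` for `c`. -/
def cAO {V : Type*} [Fintype V] (M : Matrix V V (ZMod 2)) (c : V → ZMod 2)
    (A : Set V) : Prop :=
  Solv M (chi A) ∧ ∀ p : V → ZMod 2, M.mulVec p = c → chi A ⬝ᵥ p = 1

/-- `A` is `c`-never odd activated: `A` is solvable and `x_A · p = 0` for every solving
pattern `p` for `c`. -/
def cNO {V : Type*} [Fintype V] (M : Matrix V V (ZMod 2)) (c : V → ZMod 2)
    (A : Set V) : Prop :=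
  Solv M (chi A) ∧ ∀ p : V → ZMod 2, M.mulVec p = c → chi A ⬝ᵥ p = 0

/-- `A` is always odd activated (AO): `𝟏`-always odd activated. -/
def AO {V : Type*} [Fintype V] (M : Matrix V V (ZMod 2)) (A : Set V) : Prop :=
  cAO M 1 A

/-- `A` is never odd activated (NO): `𝟏`-never odd activated. -/
def NO {V : Type*} [Fintype V] (M : Matrix V V (ZMod 2)) (A : Set V) : Prop :=
  cNO M 1 A

/-- `A` is half odd activated (HO): `x_A` is not solvable. -/
def HO {V : Type*} [Fintype V] (M : Matrix V V (ZMod 2)) (A : Set V) : Prop :=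
  ¬ Solv M (chi A)

/-!
Over `ℤ₂` the quadratic form of a symmetric matrix is linear: `r ⬝ N r = diag N ⬝ r`, because
the off-diagonal terms come in equal pairs. For `N = N(G)` the diagonal is `𝟏`, so if
`N s = 𝟏` and `N r = x_A` then `x_A ⬝ s = N r ⬝ s = r ⬝ N s = r ⬝ 𝟏 = r ⬝ N r = x_A ⬝ r`.
The same identity shows that `diag N` is orthogonal to `ker N = ker Nᵀ`, hence lies in the
range of `N`; so `𝟏` is solvable (Sutner's theorem), and `x_A ⬝ p` takes one and the same value
on all solving patterns for `𝟏` and for `x_A`.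
-/

namespace Matrix

variable {n R : Type*} [Fintype n]

theorem dotProduct_mulVec_self_of_isSymm [CommRing R] [CharP R 2] {M : Matrix n n R}
    (hM : M.IsSymm) (y : n → R) : y ⬝ᵥ M *ᵥ y = ∑ i, M i i * y i ^ 2 := by
  -- Both sides are additive in `y`: for the left side the cross terms `y ⬝ M z` and
  -- `z ⬝ M y` coincide by symmetry and cancel in characteristic two.
  have h_cross (y z : n → R) : z ⬝ᵥ M *ᵥ y = y ⬝ᵥ M *ᵥ z := by
    rw [dotProduct_mulVec, ← mulVec_transpose, hM.eq, dotProduct_comm]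
  let Q : (n → R) →+ R :=
    { toFun := fun y => y ⬝ᵥ M *ᵥ y
      map_zero' := by simp
      map_add' := fun y z => by
        simp only [mulVec_add, add_dotProduct, dotProduct_add, h_cross y z]
        linear_combination CharTwo.add_self_eq_zero (y ⬝ᵥ M *ᵥ z) }
  let L : (n → R) →+ R :=
    { toFun := fun y => ∑ i, M i i * y i ^ 2
      map_zero' := by simp
      map_add' := fun y z => by
        simp only [Pi.add_apply, CharTwo.add_sq, mul_add, Finset.sum_add_distrib] }
  have hQL : Q = L := AddMonoidHom.functions_ext _ Q L fun i x => by
    simp [Q, L, Pi.single_apply, sq]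
    ring
  exact DFunLike.congr_fun hQL y

theorem exists_mulVec_eq_of_forall_dotProduct_eq_zero {K : Type*} [Field K] [DecidableEq n]
    (M : Matrix n n K) (b : n → K) (h : ∀ y, Mᵀ *ᵥ y = 0 → y ⬝ᵥ b = 0) :
    ∃ p, M *ᵥ p = b := by
  by_contra hb
  obtain ⟨f, hfb, hf⟩ := Submodule.exists_dual_map_eq_bot_of_notMem
    (p := LinearMap.range M.mulVecLin) (x := b) (by simpa using hb) inferInstance
  set y := (dotProductEquiv K n).symm f
  have hf_eq (x : n → K) : f x = y ⬝ᵥ x := by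
    rw [← dotProductEquiv_apply_apply, LinearEquiv.apply_symm_apply]
  have hy : Mᵀ *ᵥ y = 0 := by
    ext i
    have : f (M *ᵥ Pi.single i 1) = 0 := by
      rw [← Submodule.mem_bot K, ← hf]
      exact Submodule.mem_map_of_mem ⟨_, rfl⟩
    rw [Pi.zero_apply, ← this, hf_eq, dotProduct_mulVec, mulVec_transpose, dotProduct_single,
      mul_one]
  exact hfb (by rw [hf_eq, h y hy])

theorem IsSymm.dotProduct_mulVec_self_eq_diag_dotProduct {M : Matrix n n (ZMod 2)}
    (hM : M.IsSymm) (y : n → ZMod 2) : y ⬝ᵥ M *ᵥ y = M.diag ⬝ᵥ y := by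
  rw [dotProduct_mulVec_self_of_isSymm hM]
  simp [ZMod.pow_card, dotProduct]

theorem IsSymm.exists_mulVec_eq_diag [DecidableEq n] {M : Matrix n n (ZMod 2)}
    (hM : M.IsSymm) : ∃ p, M *ᵥ p = M.diag := by
  refine M.exists_mulVec_eq_of_forall_dotProduct_eq_zero _ fun y hy => ?_
  rw [hM.eq] at hy
  rw [dotProduct_comm, ← hM.dotProduct_mulVec_self_eq_diag_dotProduct, hy, dotProduct_zero]

theorem IsSymm.dotProduct_eq_of_mulVec_eq_diag {M : Matrix n n (ZMod 2)} (hM : M.IsSymm)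
    {c s r : n → ZMod 2} (hs : M *ᵥ s = M.diag) (hr : M *ᵥ r = c) :
    c ⬝ᵥ s = c ⬝ᵥ r := by
  subst hr
  calc M *ᵥ r ⬝ᵥ s = r ⬝ᵥ M *ᵥ s := by
        rw [dotProduct_mulVec, ← mulVec_transpose, hM.eq, dotProduct_comm]
    _ = r ⬝ᵥ M *ᵥ r := by
        rw [hs, hM.dotProduct_mulVec_self_eq_diag_dotProduct, dotProduct_comm]
    _ = M *ᵥ r ⬝ᵥ r := dotProduct_comm _ _

end Matrix

theorem forall_imp_eq_iff_of_eq {α β : Type*} {P Q : α → Prop} {f : α → β} (hP : ∃ a, P a)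
    (hQ : ∃ b, Q b) (h : ∀ a b, P a → Q b → f a = f b) (v : β) :
    (∀ a, P a → f a = v) ↔ (∀ b, Q b → f b = v) := by
  obtain ⟨a₀, ha₀⟩ := hP
  obtain ⟨b₀, hb₀⟩ := hQ
  exact ⟨fun hv b hb => h a₀ b ha₀ hb ▸ hv a₀ ha₀, fun hv a ha => h a b₀ ha hb₀ ▸ hv b₀ hb₀⟩

section OddActivation

variable {V : Type*} [Fintype V] {M : Matrix V V (ZMod 2)} {c d : V → ZMod 2} {A : Set V}

theorem cAO_iff_of_dotProduct_eq (hc : Solv M c) (hd : Solv M d)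
    (h : ∀ s r, M *ᵥ s = c → M *ᵥ r = d → chi A ⬝ᵥ s = chi A ⬝ᵥ r) :
    cAO M c A ↔ cAO M d A :=
  and_congr_right' (forall_imp_eq_iff_of_eq hc hd h 1)

theorem cNO_iff_of_dotProduct_eq (hc : Solv M c) (hd : Solv M d)
    (h : ∀ s r, M *ᵥ s = c → M *ᵥ r = d → chi A ⬝ᵥ s = chi A ⬝ᵥ r) :
    cNO M c A ↔ cNO M d A :=
  and_congr_right' (forall_imp_eq_iff_of_eq hc hd h 0)

end OddActivation

section Graph

variable {V : Type*} [Fintype V] (G : SimpleGraph V)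

theorem nbhdMatrix_isSymm : (nbhdMatrix G).IsSymm := by
  ext u v
  simp [nbhdMatrix, eq_comm, G.adj_comm]

theorem diag_nbhdMatrix : (nbhdMatrix G).diag = 1 := by
  ext v
  simp [nbhdMatrix]

theorem solv_nbhdMatrix_one : Solv (nbhdMatrix G) 1 :=
  diag_nbhdMatrix G ▸ (nbhdMatrix_isSymm G).exists_mulVec_eq_diag

end Graph

/-- For a solvable set `A`: `x_A · s = x_A · r` for every odd dominating pattern `s` and
every solving pattern `r` for `x_A`; consequently `A` is AO iff `A` is `x_A`-AO and `A`
is NO iff `A` is `x_A`-NO. -/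
theorem stmt9 {V : Type*} [Fintype V] (G : SimpleGraph V) (A : Set V)
    (hA : Solv (nbhdMatrix G) (chi A)) :
    (∀ s r : V → ZMod 2, (nbhdMatrix G).mulVec s = 1 →
      (nbhdMatrix G).mulVec r = chi A → chi A ⬝ᵥ s = chi A ⬝ᵥ r) ∧
    (AO (nbhdMatrix G) A ↔ cAO (nbhdMatrix G) (chi A) A) ∧
    (NO (nbhdMatrix G) A ↔ cNO (nbhdMatrix G) (chi A) A) := by
  have key : ∀ s r : V → ZMod 2, (nbhdMatrix G).mulVec s = 1 →
      (nbhdMatrix G).mulVec r = chi A → chi A ⬝ᵥ s = chi A ⬝ᵥ r := fun s r hs hr =>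
    (nbhdMatrix_isSymm G).dotProduct_eq_of_mulVec_eq_diag (hs.trans (diag_nbhdMatrix G).symm) hr
  exact ⟨key, cAO_iff_of_dotProduct_eq (solv_nbhdMatrix_one G) hA key,
    cNO_iff_of_dotProduct_eq (solv_nbhdMatrix_one G) hA key⟩
end

section
/- Let A₁ be a NO set and A₂ be an AO set in G, with A₁ and A₂ disjoint, and suppose A₂ is x̄_{A₁}-NO in G. Then for any pattern p, N(G*)p = 𝟏 if and only if N(G)p = x̄_{A₂} or N(G)p = x̄_{A₁∪A₂}. Moreover, A₁ is AO and A₂ is HO in G*, and ν(G*) = ν(G) + 1. -/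
open Matrix
open scoped Classical

/-- The closed neighborhood matrix of the graph `G*` obtained from `G` by toggling every
pair of vertices between the disjoint sets `A₁` and `A₂`:
`N(G*) = N(G) + x_{A₁} x_{A₂}ᵗ + x_{A₂} x_{A₁}ᵗ` over `ℤ₂`. -/
noncomputable def starMatrix {V : Type*} [Fintype V] (G : SimpleGraph V)
    (A₁ A₂ : Set V) : Matrix V V (ZMod 2) :=
  nbhdMatrix G + Matrix.vecMulVec (chi A₁) (chi A₂) + Matrix.vecMulVec (chi A₂) (chi A₁)

section Aux

variable {V : Type*} [Fintype V]

lemma nbhd_symm (G : SimpleGraph V) : (nbhdMatrix G)ᵀ = nbhdMatrix G := by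
  ext u v
  simp only [nbhdMatrix, Matrix.transpose_apply, Matrix.of_apply]
  rw [if_congr (or_congr eq_comm (G.adj_comm v u)) rfl rfl]

lemma symm_dot {M : Matrix V V (ZMod 2)} (hM : Mᵀ = M) (x y : V → ZMod 2) :
    M.mulVec x ⬝ᵥ y = x ⬝ᵥ M.mulVec y := by
  rw [Matrix.dotProduct_mulVec, ← Matrix.mulVec_transpose, hM]

lemma dot_ext {a b : V → ZMod 2} (h : ∀ y, a ⬝ᵥ y = b ⬝ᵥ y) : a = b := by
  funext v
  have := h (Pi.single v 1)
  simpa [dotProduct_single] using this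

lemma quad (G : SimpleGraph V) (z : V → ZMod 2) :
    z ⬝ᵥ (nbhdMatrix G).mulVec z = (1 : V → ZMod 2) ⬝ᵥ z := by
  classical
  have hexp : z ⬝ᵥ (nbhdMatrix G).mulVec z
      = ∑ p ∈ Finset.univ ×ˢ Finset.univ, z p.1 * (nbhdMatrix G p.1 p.2 * z p.2) := by
    rw [Finset.sum_product]
    simp [dotProduct, Matrix.mulVec, Finset.mul_sum]
  have hsplit := Finset.sum_filter_add_sum_filter_not (Finset.univ ×ˢ Finset.univ)
    (fun p : V × V => p.1 = p.2) (fun p => z p.1 * (nbhdMatrix G p.1 p.2 * z p.2))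
  have hoff : ∑ p ∈ (Finset.univ ×ˢ Finset.univ).filter (fun p : V × V => ¬ p.1 = p.2),
      z p.1 * (nbhdMatrix G p.1 p.2 * z p.2) = 0 := by
    apply Finset.sum_involution (fun a _ => Prod.swap a)
    · intro a _
      have hsym := congrFun (congrFun (nbhd_symm G).symm a.2) a.1
      rw [Matrix.transpose_apply] at hsym
      simp only [Prod.fst_swap, Prod.snd_swap, hsym]
      ring_nf
      exact (by decide : ∀ x : ZMod 2, x * 2 = 0) _
    · intro a ha _ hc
      have h1 : a.2 = a.1 := congrArg Prod.fst hc
      simp only [Finset.mem_filter] at ha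
      exact ha.2 h1.symm
    · intro a ha
      simp only [Finset.mem_filter, Finset.mem_product, Finset.mem_univ, true_and] at ha ⊢
      exact fun h => ha h.symm
    · intro a _; rfl
  have hdiag : ∑ p ∈ (Finset.univ ×ˢ Finset.univ).filter (fun p : V × V => p.1 = p.2),
      z p.1 * (nbhdMatrix G p.1 p.2 * z p.2) = ∑ u, z u := by
    rw [Finset.sum_filter, Finset.sum_product]
    refine Finset.sum_congr rfl fun u _ => ?_
    rw [Finset.sum_ite_eq]
    simp only [Finset.mem_univ, if_true, nbhdMatrix, Matrix.of_apply]
    simp only [eq_self_iff_true, true_or, if_true]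
    exact (by decide : ∀ x : ZMod 2, x * (1 * x) = x) _
  have hone : (1 : V → ZMod 2) ⬝ᵥ z = ∑ u, z u := by
    simp [dotProduct]
  rw [hexp, ← hsplit, hoff, hdiag, hone, add_zero]


noncomputable def dotL : (V → ZMod 2) →ₗ[ZMod 2] Module.Dual (ZMod 2) (V → ZMod 2) where
  toFun x :=
    { toFun := fun y => x ⬝ᵥ y
      map_add' := fun y z => dotProduct_add x y z
      map_smul' := fun s y => by
        simp [dotProduct_smul, smul_eq_mul] }
  map_add' x y := by
    ext z
    simp [add_dotProduct]
  map_smul' s x := by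
    ext z
    simp [smul_dotProduct, smul_eq_mul]

lemma dotL_apply (x y : V → ZMod 2) : dotL x y = x ⬝ᵥ y := rfl

lemma dotL_injective : Function.Injective (dotL (V := V)) := by
  intro a b hab
  apply dot_ext
  intro y
  exact congrFun (congrArg (fun f => f.toFun) hab) y

lemma dotL_surjective : Function.Surjective (dotL (V := V)) := by
  refine (LinearMap.injective_iff_surjective_of_finrank_eq_finrank ?_).mp dotL_injective
  exact (Subspace.dual_finrank_eq (K := ZMod 2) (V := V → ZMod 2)).symm

lemma solv_of_orth {M : Matrix V V (ZMod 2)} (hM : Mᵀ = M) {c : V → ZMod 2}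
    (h : ∀ z, M.mulVec z = 0 → c ⬝ᵥ z = 0) : Solv M c := by
  classical
  set f := M.mulVecLin with hf
  have hc : dotL c ∈ (LinearMap.ker f).dualAnnihilator := by
    rw [Submodule.mem_dualAnnihilator]
    intro w hw
    exact h w (by simpa [hf, Matrix.mulVecLin_apply] using hw)
  rw [← LinearMap.range_dualMap_eq_dualAnnihilator_ker] at hc
  obtain ⟨ψ, hψ⟩ := hc
  obtain ⟨x, rfl⟩ := dotL_surjective ψ
  refine ⟨x, ?_⟩
  apply dot_ext
  intro y
  have := congrFun (congrArg (fun g => g.toFun) hψ) y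
  calc M.mulVec x ⬝ᵥ y = x ⬝ᵥ M.mulVec y := symm_dot hM x y
    _ = dotL x (f y) := rfl
    _ = c ⬝ᵥ y := this

lemma sutner (G : SimpleGraph V) : Solv (nbhdMatrix G) 1 := by
  apply solv_of_orth (nbhd_symm G)
  intro z hz
  have := quad G z
  rw [hz] at this
  simpa using this.symm

lemma vecMulVec_mulVec' (w v x : V → ZMod 2) :
    (Matrix.vecMulVec w v).mulVec x = (v ⬝ᵥ x) • w := by
  funext u
  simp only [Matrix.mulVec, dotProduct, Matrix.vecMulVec_apply, Pi.smul_apply,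
    smul_eq_mul, Finset.sum_mul]
  exact Finset.sum_congr rfl fun i _ => by ring

omit [Fintype V] in
lemma chi_union {A₁ A₂ : Set V} (hd : Disjoint A₁ A₂) :
    chi (A₁ ∪ A₂) = chi A₁ + chi A₂ := by
  funext v
  by_cases h1 : v ∈ A₁ <;> by_cases h2 : v ∈ A₂ <;>
    simp [chi, h1, h2]
  exact absurd h2 (Set.disjoint_left.mp hd h1)

end Aux

section Main

variable {V : Type*} [Fintype V]

lemma starMulVec_eq (G : SimpleGraph V) (A₁ A₂ : Set V) (p : V → ZMod 2) :
    (starMatrix G A₁ A₂).mulVec p =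
      (nbhdMatrix G).mulVec p + (chi A₂ ⬝ᵥ p) • chi A₁ + (chi A₁ ⬝ᵥ p) • chi A₂ := by
  simp [starMatrix, Matrix.add_mulVec, vecMulVec_mulVec']

end Main

/-- Proposition (NO, AO, `x̄_{A₁}`-NO): the odd dominating patterns of `G*` are exactly
the solving patterns of `x̄_{A₂}` or `x̄_{A₁∪A₂}` in `G`; in `G*`, `A₁` is AO and `A₂`
is HO, and `ν(G*) = ν(G) + 1`. -/
theorem stmt12 {V : Type*} [Fintype V] (G : SimpleGraph V) (A₁ A₂ : Set V)
    (hd : Disjoint A₁ A₂)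
    (h1 : NO (nbhdMatrix G) A₁) (h2 : AO (nbhdMatrix G) A₂)
    (h3 : cNO (nbhdMatrix G) (chi A₁ + 1) A₂) :
    (∀ p : V → ZMod 2, (starMatrix G A₁ A₂).mulVec p = 1 ↔
      ((nbhdMatrix G).mulVec p = chi A₂ + 1 ∨
       (nbhdMatrix G).mulVec p = chi (A₁ ∪ A₂) + 1)) ∧
    AO (starMatrix G A₁ A₂) A₁ ∧ HO (starMatrix G A₁ A₂) A₂ ∧
    nullityM (starMatrix G A₁ A₂) = nullityM (nbhdMatrix G) + 1 := by
  classical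
  obtain ⟨q₁, hq₁⟩ := h1.1
  obtain ⟨q₂, hq₂⟩ := h2.1
  obtain ⟨p₁, hp₁⟩ := sutner G
  have hsym := nbhd_symm G
  set N := nbhdMatrix G with hNdef
  -- basic dot-product constants
  have hq2one : q₂ ⬝ᵥ (1 : V → ZMod 2) = 1 := by
    have h := h2.2 p₁ hp₁
    rw [← hq₂, symm_dot hsym, hp₁] at h
    exact h
  have hq1one : q₁ ⬝ᵥ (1 : V → ZMod 2) = 0 := by
    have h := h1.2 p₁ hp₁
    rw [← hq₁, symm_dot hsym, hp₁] at h
    exact h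
  have hq2x2 : q₂ ⬝ᵥ chi A₂ = 1 := by
    calc q₂ ⬝ᵥ chi A₂ = q₂ ⬝ᵥ N.mulVec q₂ := by rw [hq₂]
      _ = (1 : V → ZMod 2) ⬝ᵥ q₂ := quad G q₂
      _ = q₂ ⬝ᵥ (1 : V → ZMod 2) := dotProduct_comm _ _
      _ = 1 := hq2one
  have hq1x1 : q₁ ⬝ᵥ chi A₁ = 0 := by
    calc q₁ ⬝ᵥ chi A₁ = q₁ ⬝ᵥ N.mulVec q₁ := by rw [hq₁]
      _ = (1 : V → ZMod 2) ⬝ᵥ q₁ := quad G q₁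
      _ = q₁ ⬝ᵥ (1 : V → ZMod 2) := dotProduct_comm _ _
      _ = 0 := hq1one
  have hx2q1 : chi A₂ ⬝ᵥ q₁ = 1 := by
    have hNp : N.mulVec (p₁ + q₁) = chi A₁ + 1 := by
      rw [Matrix.mulVec_add, hp₁, hq₁, add_comm]
    have h := h3.2 _ hNp
    rw [dotProduct_add] at h
    rw [h2.2 p₁ hp₁] at h
    exact (by decide : ∀ x : ZMod 2, 1 + x = 0 → x = 1) _ h
  have hq2x1 : q₂ ⬝ᵥ chi A₁ = 1 := by
    calc q₂ ⬝ᵥ chi A₁ = q₂ ⬝ᵥ N.mulVec q₁ := by rw [hq₁]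
      _ = N.mulVec q₂ ⬝ᵥ q₁ := (symm_dot hsym _ _).symm
      _ = chi A₂ ⬝ᵥ q₁ := by rw [hq₂]
      _ = 1 := hx2q1
  have hq1x2 : q₁ ⬝ᵥ chi A₂ = 1 := by
    calc q₁ ⬝ᵥ chi A₂ = q₁ ⬝ᵥ N.mulVec q₂ := by rw [hq₂]
      _ = N.mulVec q₁ ⬝ᵥ q₂ := (symm_dot hsym _ _).symm
      _ = chi A₁ ⬝ᵥ q₂ := by rw [hq₁]
      _ = q₂ ⬝ᵥ chi A₁ := dotProduct_comm _ _
      _ = 1 := hq2x1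
  have hx1N : ∀ p : V → ZMod 2, chi A₁ ⬝ᵥ p = q₁ ⬝ᵥ N.mulVec p := by
    intro p; rw [← hq₁, symm_dot hsym]
  have hx2N : ∀ p : V → ZMod 2, chi A₂ ⬝ᵥ p = q₂ ⬝ᵥ N.mulVec p := by
    intro p; rw [← hq₂, symm_dot hsym]
  -- values of the activations for solving patterns
  have haL : ∀ p : V → ZMod 2, N.mulVec p = chi A₂ + 1 → chi A₁ ⬝ᵥ p = 1 := by
    intro p hp
    rw [hx1N, hp, dotProduct_add, hq1x2, hq1one, add_zero]
  have hbL : ∀ p : V → ZMod 2, N.mulVec p = chi A₂ + 1 → chi A₂ ⬝ᵥ p = 0 := by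
    intro p hp
    rw [hx2N, hp, dotProduct_add, hq2x2, hq2one]
    decide
  have haR : ∀ p : V → ZMod 2, N.mulVec p = chi (A₁ ∪ A₂) + 1 → chi A₁ ⬝ᵥ p = 1 := by
    intro p hp
    rw [hx1N, hp, chi_union hd, dotProduct_add, dotProduct_add,
      hq1x1, hq1x2, hq1one]
    decide
  have hbR : ∀ p : V → ZMod 2, N.mulVec p = chi (A₁ ∪ A₂) + 1 → chi A₂ ⬝ᵥ p = 1 := by
    intro p hp
    rw [hx2N, hp, chi_union hd, dotProduct_add, dotProduct_add,
      hq2x1, hq2x2, hq2one]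
    decide
  -- the main equivalence
  have main : ∀ p : V → ZMod 2, (starMatrix G A₁ A₂).mulVec p = 1 ↔
      (N.mulVec p = chi A₂ + 1 ∨ N.mulVec p = chi (A₁ ∪ A₂) + 1) := by
    intro p
    constructor
    · intro hp
      have hsd := starMulVec_eq G A₁ A₂ p
      rw [hp] at hsd
      -- hsd : 1 = N p + b • χ₁ + a • χ₂
      have ha : chi A₁ ⬝ᵥ p = 1 := by
        have hdot := congrArg (fun w => q₂ ⬝ᵥ w) hsd
        simp only [dotProduct_add, dotProduct_smul, smul_eq_mul] at hdot
        rw [hq2one, hq2x1, hq2x2, ← hx2N] at hdot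
        revert hdot
        generalize chi A₂ ⬝ᵥ p = b
        generalize chi A₁ ⬝ᵥ p = a
        revert a b; decide
      rcases (by decide : ∀ x : ZMod 2, x = 0 ∨ x = 1) (chi A₂ ⬝ᵥ p) with hb | hb
      · left
        rw [ha, hb, zero_smul, one_smul, add_zero] at hsd
        funext v
        have := congrFun hsd v
        simp only [Pi.add_apply, Pi.one_apply] at this ⊢
        revert this
        generalize N.mulVec p v = x
        generalize chi A₂ v = y
        revert x y; decide
      · right
        rw [ha, hb, one_smul, one_smul] at hsd
        rw [chi_union hd]
        funext v
        have := congrFun hsd v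
        simp only [Pi.add_apply, Pi.one_apply] at this ⊢
        revert this
        generalize N.mulVec p v = x
        generalize chi A₁ v = y
        generalize chi A₂ v = w
        revert x y w; decide
    · rintro (hp | hp)
      · rw [starMulVec_eq, haL p hp, hbL p hp, hp, zero_smul, one_smul, add_zero]
        funext v
        simp only [Pi.add_apply, Pi.one_apply]
        generalize chi A₂ v = y
        revert y; decide
      · rw [starMulVec_eq, haR p hp, hbR p hp, hp, one_smul, one_smul, chi_union hd]
        funext v
        simp only [Pi.add_apply, Pi.one_apply]
        generalize chi A₁ v = y
        generalize chi A₂ v = w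
        revert y w; decide
  refine ⟨main, ⟨⟨q₂, ?_⟩, ?_⟩, ?_, ?_⟩
  · -- A₁ is solvable in G*
    rw [starMulVec_eq, hq₂, dotProduct_comm (chi A₂) q₂, hq2x2,
      dotProduct_comm (chi A₁) q₂, hq2x1, one_smul, one_smul]
    funext v
    simp only [Pi.add_apply]
    generalize chi A₁ v = y
    generalize chi A₂ v = w
    revert y w; decide
  · -- A₁ is 1-AO in G*
    intro p hp
    rcases (main p).mp hp with h | h
    · exact haL p h
    · exact haR p h
  · -- A₂ is HO in G*
    rintro ⟨q, hq⟩
    have hsd := starMulVec_eq G A₁ A₂ q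
    rw [hq] at hsd
    have hdot := congrArg (fun w => q₁ ⬝ᵥ w) hsd
    simp only [dotProduct_add, dotProduct_smul, smul_eq_mul] at hdot
    rw [hq1x2, hq1x1, ← hx1N] at hdot
    revert hdot
    generalize chi A₁ ⬝ᵥ q = a
    generalize chi A₂ ⬝ᵥ q = b
    revert a b; decide
  · -- nullity
    have hq1ne : q₁ ≠ 0 := by
      intro h
      rw [h] at hx2q1
      simp at hx2q1
    have hq1nk : q₁ ∉ LinearMap.ker N.mulVecLin := by
      intro h
      rw [LinearMap.mem_ker, Matrix.mulVecLin_apply, hq₁] at h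
      rw [h] at hq2x1
      simp at hq2x1
    have hkerN_le : LinearMap.ker N.mulVecLin ≤
        LinearMap.ker (starMatrix G A₁ A₂).mulVecLin := by
      intro z hz
      rw [LinearMap.mem_ker, Matrix.mulVecLin_apply] at hz ⊢
      have hz1 : chi A₁ ⬝ᵥ z = 0 := by rw [hx1N, hz, dotProduct_zero]
      have hz2 : chi A₂ ⬝ᵥ z = 0 := by rw [hx2N, hz, dotProduct_zero]
      rw [starMulVec_eq, hz, hz1, hz2, zero_smul, zero_smul, add_zero, add_zero]
    have hq1mem : q₁ ∈ LinearMap.ker (starMatrix G A₁ A₂).mulVecLin := by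
      rw [LinearMap.mem_ker, Matrix.mulVecLin_apply, starMulVec_eq, hq₁, hx2q1,
        dotProduct_comm (chi A₁) q₁, hq1x1, one_smul, zero_smul, add_zero]
      funext v
      simp only [Pi.add_apply, Pi.zero_apply]
      exact (by decide : ∀ x : ZMod 2, x + x = 0) _
    have hker : LinearMap.ker (starMatrix G A₁ A₂).mulVecLin
        = LinearMap.ker N.mulVecLin ⊔ Submodule.span (ZMod 2) {q₁} := by
      apply le_antisymm
      · intro z hz
        rw [LinearMap.mem_ker, Matrix.mulVecLin_apply, starMulVec_eq] at hz
        have hs : chi A₁ ⬝ᵥ z = 0 := by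
          have hdot := congrArg (fun w => q₂ ⬝ᵥ w) hz
          simp only [dotProduct_add, dotProduct_smul, smul_eq_mul,
            dotProduct_zero] at hdot
          rw [hq2x1, hq2x2, ← hx2N] at hdot
          revert hdot
          generalize chi A₂ ⬝ᵥ z = b
          generalize chi A₁ ⬝ᵥ z = a
          revert a b; decide
        rcases (by decide : ∀ x : ZMod 2, x = 0 ∨ x = 1) (chi A₂ ⬝ᵥ z) with ht | ht
        · rw [hs, ht, zero_smul, zero_smul, add_zero, add_zero] at hz
          exact Submodule.mem_sup_left
            (by rw [LinearMap.mem_ker, Matrix.mulVecLin_apply]; exact hz)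
        · rw [hs, ht, zero_smul, one_smul, add_zero] at hz
          have hzmem : z + q₁ ∈ LinearMap.ker N.mulVecLin := by
            rw [LinearMap.mem_ker, Matrix.mulVecLin_apply, Matrix.mulVec_add, hq₁]
            exact hz
          have hzeq : z = (z + q₁) + q₁ := by
            funext v
            simp only [Pi.add_apply]
            generalize z v = x
            generalize q₁ v = y
            revert x y; decide
          rw [hzeq]
          exact Submodule.add_mem_sup hzmem (Submodule.mem_span_singleton_self q₁)
      · refine sup_le hkerN_le ?_
        rw [Submodule.span_le, Set.singleton_subset_iff]
        exact hq1mem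
    have hinf : LinearMap.ker N.mulVecLin ⊓ Submodule.span (ZMod 2) {q₁} = ⊥ := by
      rw [Submodule.eq_bot_iff]
      intro y hy
      rw [Submodule.mem_inf] at hy
      obtain ⟨hyK, hyS⟩ := hy
      rw [Submodule.mem_span_singleton] at hyS
      obtain ⟨c, rfl⟩ := hyS
      rcases (by decide : ∀ x : ZMod 2, x = 0 ∨ x = 1) c with rfl | rfl
      · rw [zero_smul]
      · rw [one_smul] at hyK ⊢
        exact absurd hyK hq1nk
    have hco := Submodule.finrank_sup_add_finrank_inf_eq (LinearMap.ker N.mulVecLin)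
      (Submodule.span (ZMod 2) {q₁})
    rw [hinf, finrank_span_singleton hq1ne] at hco
    unfold nullityM
    rw [hker]
    simpa using hco
end
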